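/- arXiv:1907.12553 — 2 statements merged into one kernel-verified Lean document; each statement's English description precedes it below -/
import Mathlib

section
/- Let γ ≥ 10, s ≥ 2 a natural number, and x, y real numbers. If |cos x| ≤ γ^(−s) and |cos y| ≤ γ^(−s), then |cos(x + y)| ≥ 1 − 3·γ^(−4). -/
open Real

/-- In a deep corner sector both cosine factors are small, and then the third factor
is of order one: if `|cos x| ≤ γ⁻ˢ` and `|cos y| ≤ γ⁻ˢ` with `γ ≥ 10`, `s ≥ 2`, then
`|cos (x+y)| ≥ 1 − 3γ⁻⁴`. -/
theorem stmt7 (γ : ℝ) (hγ : 10 ≤ γ) (s : ℕ) (hs : 2 ≤ s) (x y : ℝ)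
    (hx : |Real.cos x| ≤ γ ^ (-(s : ℤ))) (hy : |Real.cos y| ≤ γ ^ (-(s : ℤ))) :
    1 - 3 * γ ^ (-4 : ℤ) ≤ |Real.cos (x + y)| := by
  set ε : ℝ := γ ^ (-(s : ℤ)) with hεdef
  have hγ1 : (1 : ℝ) ≤ γ := by linarith
  have hγ0 : (0 : ℝ) < γ := by linarith
  have hε0 : 0 ≤ ε := le_of_lt (zpow_pos hγ0 _)
  have hεle : ε ≤ γ ^ (-2 : ℤ) := by
    apply zpow_le_zpow_right₀ hγ1
    omega
  have h2pos : (0:ℝ) < γ ^ (-2 : ℤ) := zpow_pos hγ0 _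
  have h4pos : (0:ℝ) < γ ^ (-4 : ℤ) := zpow_pos hγ0 _
  have hsq : ε ^ 2 ≤ γ ^ (-4 : ℤ) := by
    have h : γ ^ (-2 : ℤ) * γ ^ (-2 : ℤ) = γ ^ (-4 : ℤ) := by
      rw [← zpow_add₀ (ne_of_gt hγ0)]; norm_num
    nlinarith
  have hεone : ε ≤ 1 := by
    have : γ ^ (-2 : ℤ) ≤ 1 := zpow_le_one_of_nonpos₀ hγ1 (by norm_num)
    linarith
  have hsin : ∀ z : ℝ, |Real.cos z| ≤ ε → 1 - ε ^ 2 ≤ Real.sin z ^ 2 := by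
    intro z hz
    have h1 := Real.sin_sq_add_cos_sq z
    have hc : Real.cos z ^ 2 ≤ ε ^ 2 := by
      rw [← sq_abs]
      exact pow_le_pow_left₀ (abs_nonneg _) hz 2
    nlinarith
  have hsx := hsin x hx
  have hsy := hsin y hy
  have hcx : Real.cos x ^ 2 ≤ ε ^ 2 := by
    rw [← sq_abs]; exact pow_le_pow_left₀ (abs_nonneg _) hx 2
  have hcy : Real.cos y ^ 2 ≤ ε ^ 2 := by
    rw [← sq_abs]; exact pow_le_pow_left₀ (abs_nonneg _) hy 2
  -- |sin x * sin y| ≥ 1 - ε²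
  have hss : 1 - ε ^ 2 ≤ |Real.sin x * Real.sin y| := by
    rw [abs_mul]
    have hnn : 0 ≤ 1 - ε ^ 2 := by nlinarith
    have h1 : (1 - ε ^ 2) ^ 2 ≤ (|Real.sin x| * |Real.sin y|) ^ 2 := by
      rw [mul_pow, sq_abs, sq_abs, sq]
      exact mul_le_mul hsx hsy hnn (sq_nonneg _)
    nlinarith [abs_nonneg (Real.sin x), abs_nonneg (Real.sin y),
      mul_nonneg (abs_nonneg (Real.sin x)) (abs_nonneg (Real.sin y))]
  have hcc : |Real.cos x * Real.cos y| ≤ ε ^ 2 := by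
    rw [abs_mul]
    calc |Real.cos x| * |Real.cos y| ≤ ε * ε :=
          mul_le_mul hx hy (abs_nonneg _) hε0
      _ = ε ^ 2 := (sq ε).symm
  have hkey : |Real.sin x * Real.sin y| - |Real.cos x * Real.cos y|
      ≤ |Real.cos (x + y)| := by
    rw [Real.cos_add]
    calc |Real.sin x * Real.sin y| - |Real.cos x * Real.cos y|
        ≤ |Real.sin x * Real.sin y - Real.cos x * Real.cos y| :=
          abs_sub_abs_le_abs_sub _ _
      _ = |Real.cos x * Real.cos y - Real.sin x * Real.sin y| := abs_sub_comm _ _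
  linarith
end

section
/- Let γ ≥ 2. There exist positive constants c₁ and c₂ (depending only on γ) such that for every natural number j ≥ 3: c₁·j·γ^(−j) ≤ Σ γ^(−s₊−s₋) ≤ c₂·j·γ^(−j), where the sum is over all pairs of natural numbers (s₊, s₋) with 0 ≤ s₊ ≤ j, 0 ≤ s₋ ≤ j and s₊ + s₋ ≥ j − 2. -/
/-!
Writing `x = γ⁻¹ ≤ 1/2`, the summand is `x ^ (s₊ + s₋)`. The diagonal `s₊ + s₋ = j` alone
contributes `(j + 1) xʲ`. Conversely, each level set `s₊ + s₋ = k` contains at most `j + 1`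
sectors, and the levels `k ≥ j - 2` form a geometric series summing to at most `2 x^(j-2)`.
-/

open Finset

section GeometricBounds

variable {x : ℝ}

lemma sum_pow_le_of_forall_le (hx0 : 0 ≤ x) (hx1 : x < 1) {T : Finset ℕ} {m : ℕ}
    (hT : ∀ k ∈ T, m ≤ k) : ∑ k ∈ T, x ^ k ≤ x ^ m / (1 - x) := by
  have hsub : T ⊆ Ico m (T.sup id + 1) := fun k hk =>
    mem_Ico.2 ⟨hT k hk, Nat.lt_succ_of_le (le_sup (f := id) hk)⟩
  calc ∑ k ∈ T, x ^ k ≤ ∑ k ∈ Ico m (T.sup id + 1), x ^ k :=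
        sum_le_sum_of_subset_of_nonneg hsub fun _ _ _ => pow_nonneg hx0 _
    _ ≤ x ^ m / (1 - x) := geom_sum_Ico_le_of_lt_one hx0 hx1

lemma sum_pow_le_of_card_fiber_le {α : Type*} (hx0 : 0 ≤ x) (hx1 : x < 1) (s : Finset α)
    (w : α → ℕ) {m N : ℕ} (hw : ∀ p ∈ s, m ≤ w p) (hN : ∀ k, #{p ∈ s | w p = k} ≤ N) :
    ∑ p ∈ s, x ^ w p ≤ N * (x ^ m / (1 - x)) := by
  rw [sum_comp (fun k => x ^ k) w]
  calc ∑ k ∈ s.image w, #{p ∈ s | w p = k} • x ^ k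
        ≤ ∑ k ∈ s.image w, (N : ℝ) * x ^ k := by
          refine sum_le_sum fun k _ => ?_
          rw [nsmul_eq_mul]
          exact mul_le_mul_of_nonneg_right (by exact_mod_cast hN k) (pow_nonneg hx0 _)
    _ ≤ N * (x ^ m / (1 - x)) := by
          rw [← mul_sum]
          refine mul_le_mul_of_nonneg_left (sum_pow_le_of_forall_le hx0 hx1 ?_) N.cast_nonneg
          simpa only [mem_image, forall_exists_index, and_imp, forall_apply_eq_imp_iff₂] using hw

end GeometricBounds

lemma card_filter_add_eq_le (s : Finset (ℕ × ℕ)) {n : ℕ} (hs : ∀ p ∈ s, p.1 < n) (k : ℕ) :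
    #{p ∈ s | p.1 + p.2 = k} ≤ n := by
  simpa using card_le_card_of_injOn (t := range n) Prod.fst
    (fun p hp => mem_range.2 (hs p (mem_filter.1 hp).1))
    (fun p hp q hq h => by
      simp only [coe_filter, Set.mem_ofPred_eq] at hp hq
      exact Prod.ext h (by omega))

def sectors (j : ℕ) : Finset (ℕ × ℕ) :=
  (range (j + 1) ×ˢ range (j + 1)).filter (fun p => j ≤ p.1 + p.2 + 2)

lemma antidiagonal_subset_sectors (j : ℕ) : antidiagonal j ⊆ sectors j := by
  intro p hp
  rw [HasAntidiagonal.mem_antidiagonal] at hp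
  simp only [sectors, mem_filter, mem_product, mem_range]
  omega

lemma pow_mul_le_sum_sectors {x : ℝ} (hx0 : 0 ≤ x) (j : ℕ) :
    (j + 1) * x ^ j ≤ ∑ p ∈ sectors j, x ^ (p.1 + p.2) := by
  calc (j + 1) * x ^ j = ∑ p ∈ antidiagonal j, x ^ (p.1 + p.2) := by
        rw [sum_congr rfl fun p hp => by rw [HasAntidiagonal.mem_antidiagonal.1 hp], sum_const,
          Nat.card_antidiagonal, nsmul_eq_mul]
        push_cast
        ring
    _ ≤ ∑ p ∈ sectors j, x ^ (p.1 + p.2) :=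
        sum_le_sum_of_subset_of_nonneg (antidiagonal_subset_sectors j)
          fun _ _ _ => pow_nonneg hx0 _

lemma sum_sectors_le {x : ℝ} (hx0 : 0 ≤ x) (hx1 : x < 1) (j : ℕ) :
    ∑ p ∈ sectors j, x ^ (p.1 + p.2) ≤ (j + 1) * (x ^ (j - 2) / (1 - x)) := by
  have hmem : ∀ p ∈ sectors j, p.1 < j + 1 ∧ j - 2 ≤ p.1 + p.2 := fun p hp => by
    simp only [sectors, mem_filter, mem_product, mem_range] at hp
    omega
  exact_mod_cast sum_pow_le_of_card_fiber_le hx0 hx1 _ (fun p => p.1 + p.2)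
    (fun p hp => (hmem p hp).2) (card_filter_add_eq_le _ fun p hp => (hmem p hp).1)

lemma sum_sectors_le_four_mul {x : ℝ} (hx0 : 0 ≤ x) (hx : x ≤ 1 / 2) {j : ℕ} (hj : 1 ≤ j) :
    ∑ p ∈ sectors j, x ^ (p.1 + p.2) ≤ 4 * j * x ^ (j - 2) := by
  have hgeom : 1 / (1 - x) ≤ 2 := by
    rw [div_le_iff₀ (by linarith)]; linarith
  have hj1 : (j : ℝ) + 1 ≤ 2 * j := by
    have : (1 : ℝ) ≤ j := by exact_mod_cast hj
    linarith
  calc ∑ p ∈ sectors j, x ^ (p.1 + p.2) ≤ (j + 1) * (x ^ (j - 2) / (1 - x)) :=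
        sum_sectors_le hx0 (by linarith) j
    _ = ((j : ℝ) + 1) * (1 / (1 - x)) * x ^ (j - 2) := by ring
    _ ≤ (2 * j) * 2 * x ^ (j - 2) := by
        gcongr
        exact one_div_nonneg.2 (by linarith)
    _ = 4 * j * x ^ (j - 2) := by ring

lemma zpow_neg_natCast_sub_natCast (γ : ℝ) (a b : ℕ) :
    γ ^ (-(a : ℤ) - (b : ℤ)) = γ⁻¹ ^ (a + b) := by
  rw [show -(a : ℤ) - b = -((a + b : ℕ) : ℤ) by push_cast; ring, zpow_neg, zpow_natCast, inv_pow]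

/-- Two-sided bound, of order `j·γ⁻ʲ`, on the sector sum `Σ γ^(−s₊−s₋)` over the
admissible sectors `0 ≤ s₊, s₋ ≤ j`, `s₊ + s₋ ≥ j − 2` (tadpole amplitude at scale `j`). -/
theorem stmt13 (γ : ℝ) (hγ : 2 ≤ γ) :
    ∃ c₁ c₂ : ℝ, 0 < c₁ ∧ 0 < c₂ ∧
      ∀ j : ℕ, 3 ≤ j →
        c₁ * j * γ ^ (-(j : ℤ)) ≤
          (∑ p ∈ (Finset.range (j + 1) ×ˢ Finset.range (j + 1)).filter
              (fun p => j ≤ p.1 + p.2 + 2), γ ^ (-(p.1 : ℤ) - (p.2 : ℤ))) ∧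
        (∑ p ∈ (Finset.range (j + 1) ×ˢ Finset.range (j + 1)).filter
              (fun p => j ≤ p.1 + p.2 + 2), γ ^ (-(p.1 : ℤ) - (p.2 : ℤ))) ≤
          c₂ * j * γ ^ (-(j : ℤ)) := by
  have hγ0 : γ ≠ 0 := by positivity
  have hx0 : 0 ≤ γ⁻¹ := by positivity
  have hx : γ⁻¹ ≤ 1 / 2 := by rw [one_div]; exact inv_anti₀ two_pos hγ
  refine ⟨1, 4 * γ ^ 2, one_pos, by positivity, fun j hj => ?_⟩
  simp only [zpow_neg_natCast_sub_natCast, zpow_neg, zpow_natCast, ← inv_pow]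
  change _ ≤ ∑ p ∈ sectors j, _ ∧ ∑ p ∈ sectors j, _ ≤ _
  constructor
  · calc 1 * (j : ℝ) * γ⁻¹ ^ j ≤ (j + 1) * γ⁻¹ ^ j := by nlinarith [pow_nonneg hx0 j]
      _ ≤ _ := pow_mul_le_sum_sectors hx0 j
  · have hpow : γ⁻¹ ^ (j - 2) = γ ^ 2 * γ⁻¹ ^ j := by
      rw [pow_sub₀ _ (inv_ne_zero hγ0) (by omega), ← inv_pow γ⁻¹ 2, inv_inv, mul_comm]
    calc _ ≤ 4 * j * γ⁻¹ ^ (j - 2) := sum_sectors_le_four_mul hx0 hx (by omega)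
      _ = 4 * γ ^ 2 * j * γ⁻¹ ^ j := by rw [hpow]; ring
end
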